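/- arXiv:2504.05821 — 2 statements merged into one kernel-verified Lean document; each statement's English description precedes it below -/
import Mathlib

section
/- Let B be a bialgebra for which p_B : B ⧄ B → B is injective, with associated linear endomorphism T of B satisfying T(Σ xᶦ ε(yᵢ)) = Σ ε(xᶦ) yᵢ for all Σ xᶦ ⊗ yᵢ ∈ B ⧄ B. Then for all a, b in the image of p_B: (1) a₁ T(a₂) = ε(a)·1; (2) T(a₁) ⊗ T(a₂) = T(a)₂ ⊗ T(a)₁; (3) T(ab) = T(b) T(a). -/
/-!
Over a field every module is flat, so an element of `B ⊗ (B ⊗ B)` whose last two legs are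
coinvariant lies in `B ⊗ (B ⧄ B)`, and there `id ⊗ (T ∘ p_B)` agrees with `id ⊗ q_B`, where
`q_B (x ⊗ y) = ε(x) y`. For `z = Σ x ⊗ y ∈ B ⧄ B`, coassociativity makes `Σ x₁ ⊗ x₂ ⊗ y` and
`Σ y₁ ⊗ x ⊗ y₂` such elements; this gives `(id ⊗ T) Δ(p_B z) = z` and
`(T ⊗ id) z = τ Δ(q_B z)`, hence (1) and (2), using that `Σ x y = ε(p_B z) 1` on coinvariants.
For (3), `B ⧄ B` is closed under the product of `B ⊗ Bᵒᵖ`, for which `p_B` is multiplicative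
and `q_B` anti-multiplicative.
-/

noncomputable section
open TensorProduct LinearMap

/-- Convolution product of linear maps from a bialgebra to an algebra. -/
def conv {k B A : Type*} [CommRing k] [Ring B] [Bialgebra k B]
    [Ring A] [Algebra k A] (f g : B →ₗ[k] A) : B →ₗ[k] A :=
  LinearMap.mul' k A ∘ₗ TensorProduct.map f g ∘ₗ Coalgebra.comul

/-- Unit of the convolution algebra: u ∘ ε. -/
def convUnit (k B A : Type*) [CommRing k] [Ring B] [Bialgebra k B]
    [Ring A] [Algebra k A] : B →ₗ[k] A :=
  Algebra.linearMap k A ∘ₗ Coalgebra.counit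

/-- n-th convolution power of the identity. -/
def convPow (k B : Type*) [CommRing k] [Ring B] [Bialgebra k B] : ℕ → (B →ₗ[k] B)
  | 0 => convUnit k B B
  | n + 1 => conv (convPow k B n) LinearMap.id

/-- The submodule (B ⊗ B)·Δ(ker ε) of B ⊗ B. -/
def oslashRel (k B : Type*) [CommRing k] [Ring B] [Bialgebra k B] :
    Submodule k (B ⊗[k] B) :=
  Submodule.span k {z | ∃ (m : B ⊗[k] B) (b : B),
    Coalgebra.counit (R := k) b = 0 ∧ z = m * Coalgebra.comul b}

/-- B ⊘ B. -/
abbrev Oslash (k B : Type*) [CommRing k] [Ring B] [Bialgebra k B] :=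
  (B ⊗[k] B) ⧸ oslashRel k B

/-- The class of x ⊗ y in B ⊘ B. -/
abbrev omk (k : Type*) {B : Type*} [CommRing k] [Ring B] [Bialgebra k B]
    (z : B ⊗[k] B) : Oslash k B := Submodule.Quotient.mk z

/-- i_B : B → B ⊘ B, b ↦ b ⊘ 1. -/
def iB (k B : Type*) [CommRing k] [Ring B] [Bialgebra k B] : B →ₗ[k] Oslash k B :=
  (oslashRel k B).mkQ ∘ₗ (TensorProduct.mk k B B).flip 1

/-- The diagonal right coaction of B on B ⊗ B: Σ x₁ ⊗ y₁ ⊗ x₂y₂. -/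
def coact (k B : Type*) [CommRing k] [Ring B] [Bialgebra k B] :
    (B ⊗[k] B) →ₗ[k] (B ⊗[k] B) ⊗[k] B :=
  (TensorProduct.map LinearMap.id (LinearMap.mul' k B)) ∘ₗ
    (TensorProduct.tensorTensorTensorComm k B B B B).toLinearMap ∘ₗ
    (TensorProduct.map Coalgebra.comul Coalgebra.comul)

/-- z ↦ z ⊗ 1. -/
def unitR (k B : Type*) [CommRing k] [Ring B] [Bialgebra k B] :
    (B ⊗[k] B) →ₗ[k] (B ⊗[k] B) ⊗[k] B :=
  (TensorProduct.map LinearMap.id (Algebra.linearMap k B)) ∘ₗ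
    (TensorProduct.rid k (B ⊗[k] B)).symm.toLinearMap

/-- B ⧄ B : the coinvariants of B ⊗ B. -/
def coinv (k B : Type*) [CommRing k] [Ring B] [Bialgebra k B] :
    Submodule k (B ⊗[k] B) :=
  LinearMap.eqLocus (coact k B) (unitR k B)

/-- Σ x ⊗ y ↦ Σ x ε(y), on all of B ⊗ B. -/
def pB0 (k B : Type*) [CommRing k] [Ring B] [Bialgebra k B] :
    (B ⊗[k] B) →ₗ[k] B :=
  (TensorProduct.rid k B).toLinearMap ∘ₗ TensorProduct.map LinearMap.id Coalgebra.counit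

/-- Σ x ⊗ y ↦ Σ ε(x) y, on all of B ⊗ B. -/
def qB0 (k B : Type*) [CommRing k] [Ring B] [Bialgebra k B] :
    (B ⊗[k] B) →ₗ[k] B :=
  (TensorProduct.lid k B).toLinearMap ∘ₗ TensorProduct.map Coalgebra.counit LinearMap.id

/-- p_B : B ⧄ B → B. -/
def pB (k B : Type*) [CommRing k] [Ring B] [Bialgebra k B] :
    coinv k B →ₗ[k] B :=
  pB0 k B ∘ₗ (coinv k B).subtype

open Coalgebra

theorem LinearMap.lTensor_eq_of_eqOn_eqLocus {R P M N Q : Type*} [CommRing R]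
    [AddCommGroup P] [Module R P] [Module.Flat R P] [AddCommGroup M] [Module R M]
    [AddCommGroup N] [Module R N] [AddCommGroup Q] [Module R Q]
    {f g : M →ₗ[R] N} {h₁ h₂ : M →ₗ[R] Q} (h : ∀ m ∈ eqLocus f g, h₁ m = h₂ m)
    {w : P ⊗[R] M} (hw : lTensor P f w = lTensor P g w) :
    lTensor P h₁ w = lTensor P h₂ w := by
  have hexact := Module.Flat.lTensor_exact P (exact_subtype_ker_map (f - g))
  obtain ⟨w', rfl⟩ := (hexact w).mp (by rw [lTensor_sub, sub_apply, hw, sub_self])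
  simp only [← comp_apply, ← lTensor_comp]
  congr 2
  ext ⟨m, hm⟩
  exact h m (by rwa [eqLocus_eq_ker_sub])

section

variable {k B : Type*} [CommRing k] [Ring B] [Bialgebra k B]

theorem unitR_apply (z : B ⊗[k] B) : unitR k B z = z ⊗ₜ 1 := by
  simp [unitR]

theorem mem_coinv_iff {z : B ⊗[k] B} : z ∈ coinv k B ↔ coact k B z = z ⊗ₜ 1 := by
  rw [← unitR_apply]; rfl

@[simp] theorem pB0_tmul (x y : B) : pB0 k B (x ⊗ₜ y) = counit (R := k) y • x := by
  simp [pB0]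

@[simp] theorem qB0_tmul (x y : B) : qB0 k B (x ⊗ₜ y) = counit (R := k) x • y := by
  simp [qB0]

@[simp] theorem pB0_comul (x : B) : pB0 k B (comul x) = x := by
  simp [pB0, ← lTensor_def]

@[simp] theorem qB0_comul (x : B) : qB0 k B (comul x) = x := by
  simp [qB0, ← rTensor_def]

variable (k B) in
def embedFst : B ⊗[k] B →ₐ[k] (B ⊗[k] B) ⊗[k] B :=
  Algebra.TensorProduct.map Algebra.TensorProduct.includeLeft (AlgHom.id k B)

variable (k B) in
def embedSnd : B ⊗[k] B →ₐ[k] (B ⊗[k] B) ⊗[k] B :=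
  Algebra.TensorProduct.map Algebra.TensorProduct.includeRight (AlgHom.id k B)

@[simp] theorem embedFst_tmul (a b : B) : embedFst k B (a ⊗ₜ b) = (a ⊗ₜ 1) ⊗ₜ b := rfl

@[simp] theorem embedSnd_tmul (a b : B) : embedSnd k B (a ⊗ₜ b) = (1 ⊗ₜ a) ⊗ₜ b := rfl

variable (k B) in
def embedMul : B ⊗[k] B →ₗ[k] B ⊗[k] B →ₗ[k] (B ⊗[k] B) ⊗[k] B :=
  (LinearMap.mul k _).compl₁₂ (embedFst k B).toLinearMap (embedSnd k B).toLinearMap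

@[simp] theorem embedMul_apply (u v : B ⊗[k] B) :
    embedMul k B u v = embedFst k B u * embedSnd k B v := rfl

theorem coact_tmul (x y : B) :
    coact k B (x ⊗ₜ y) = embedFst k B (comul x) * embedSnd k B (comul y) := by
  simp only [coact, comp_apply, map_tmul, LinearEquiv.coe_coe]
  induction comul (R := k) x using TensorProduct.induction_on with
  | zero => simp
  | add u v hu hv => simp [add_tmul, hu, hv, add_mul]
  | tmul a b =>
    induction comul (R := k) y using TensorProduct.induction_on with
    | zero => simp
    | add u v hu hv => simp [tmul_add, hu, hv, mul_add]
    | tmul c d => simp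

theorem mul'_eq_counit_smul_one {z : B ⊗[k] B} (hz : z ∈ coinv k B) :
    mul' k B z = counit (R := k) (pB0 k B z) • (1 : B) := by
  let κ : (B ⊗[k] B) ⊗[k] B →ₗ[k] B := TensorProduct.lid k B ∘ₗ rTensor B (counit ∘ₗ pB0 k B)
  have hκ : ∀ u v : B ⊗[k] B, κ (embedFst k B u * embedSnd k B v) = qB0 k B u * qB0 k B v := by
    intro u v
    induction u using TensorProduct.induction_on with
    | zero => simp
    | add u u' hu hu' => simp only [map_add, add_mul, hu, hu']
    | tmul a b =>
      induction v using TensorProduct.induction_on with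
      | zero => simp
      | add v v' hv hv' => simp only [map_add, mul_add, hv, hv']
      | tmul c d => simp [κ, smul_smul, mul_comm]
  have hcoact : ∀ w, κ (coact k B w) = mul' k B w := by
    intro w
    induction w using TensorProduct.induction_on with
    | zero => simp
    | add u v hu hv => simp only [map_add, hu, hv]
    | tmul x y =>
      simp only [coact_tmul, hκ, qB0_comul, mul'_apply]
  rw [← hcoact, mem_coinv_iff.mp hz]
  simp [κ]

theorem lTensor_unitR (w : B ⊗[k] (B ⊗[k] B)) :
    lTensor B (unitR k B) w = TensorProduct.assoc k B (B ⊗[k] B) B (w ⊗ₜ 1) := by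
  induction w using TensorProduct.induction_on with
  | zero => simp
  | add u v hu hv => simp only [map_add, add_tmul, hu, hv]
  | tmul a u => simp [unitR_apply]

theorem lTensor_coact_eq_of_colinear {F : B ⊗[k] B →ₗ[k] B ⊗[k] (B ⊗[k] B)}
    (hF : lTensor B (coact k B) ∘ₗ F =
      (TensorProduct.assoc k B (B ⊗[k] B) B).toLinearMap ∘ₗ rTensor B F ∘ₗ coact k B)
    {z : B ⊗[k] B} (hz : z ∈ coinv k B) :
    lTensor B (coact k B) (F z) = lTensor B (unitR k B) (F z) := by
  rw [← comp_apply, hF, comp_apply, comp_apply, mem_coinv_iff.mp hz, rTensor_tmul, lTensor_unitR]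
  rfl

variable (k B) in
def comulLeft : B ⊗[k] B →ₗ[k] B ⊗[k] (B ⊗[k] B) :=
  (TensorProduct.assoc k B B B).toLinearMap ∘ₗ rTensor B comul

variable (k B) in
def comulRight : B ⊗[k] B →ₗ[k] B ⊗[k] (B ⊗[k] B) :=
  (TensorProduct.leftComm k B B B).toLinearMap ∘ₗ lTensor B comul

theorem comulLeft_colinear :
    lTensor B (coact k B) ∘ₗ comulLeft k B =
      (TensorProduct.assoc k B (B ⊗[k] B) B).toLinearMap ∘ₗ rTensor B (comulLeft k B) ∘ₗ
        coact k B := by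
  refine TensorProduct.ext' fun x y => ?_
  -- Both sides are `lTensor B ((embedMul k B).flip (comul y))` of a side of coassociativity at `x`.
  have hlhs : ∀ u : B ⊗[k] B, lTensor B (coact k B) (TensorProduct.assoc k B B B (u ⊗ₜ y)) =
      lTensor B ((embedMul k B).flip (comul y)) (lTensor B comul u) := by
    intro u
    induction u using TensorProduct.induction_on with
    | zero => simp
    | add u u' hu hu' => simp only [add_tmul, map_add, hu, hu']
    | tmul a b => simp [coact_tmul]
  have hrhs : ∀ u v : B ⊗[k] B, TensorProduct.assoc k B (B ⊗[k] B) B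
      (rTensor B (comulLeft k B) (embedMul k B u v)) =
      lTensor B ((embedMul k B).flip v) (TensorProduct.assoc k B B B (rTensor B comul u)) := by
    intro u v
    induction u using TensorProduct.induction_on with
    | zero => simp
    | add u u' hu hu' => simp only [map_add, LinearMap.add_apply, hu, hu']
    | tmul a b =>
      induction v using TensorProduct.induction_on with
      | zero => simp
      | add v v' hv hv' => simp only [map_add, lTensor_add, LinearMap.add_apply, hv, hv']
      | tmul c d =>
        simp only [embedMul_apply, embedFst_tmul, embedSnd_tmul,
          Algebra.TensorProduct.tmul_mul_tmul, one_mul, mul_one, rTensor_tmul, comulLeft,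
          comp_apply]
        induction comul (R := k) a using TensorProduct.induction_on with
        | zero => simp
        | add e e' he he' => simp only [add_tmul, map_add, he, he']
        | tmul e f => simp
  rw [comp_apply, comp_apply, comp_apply, LinearEquiv.coe_coe, coact_tmul, ← embedMul_apply,
    hrhs, coassoc_apply]
  simp only [comulLeft, comp_apply, LinearEquiv.coe_coe, rTensor_tmul, hlhs]

theorem comulRight_colinear :
    lTensor B (coact k B) ∘ₗ comulRight k B =
      (TensorProduct.assoc k B (B ⊗[k] B) B).toLinearMap ∘ₗ rTensor B (comulRight k B) ∘ₗ
        coact k B := by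
  refine TensorProduct.ext' fun x y => ?_
  -- Both sides are `lTensor B (embedMul k B (comul x))` of a side of coassociativity at `y`.
  have hlhs : ∀ v : B ⊗[k] B,
      lTensor B (coact k B) (TensorProduct.leftComm k B B B (x ⊗ₜ v)) =
      lTensor B (embedMul k B (comul x)) (lTensor B comul v) := by
    intro v
    induction v using TensorProduct.induction_on with
    | zero => simp
    | add v v' hv hv' => simp only [tmul_add, map_add, hv, hv']
    | tmul c d => simp [coact_tmul]
  have hrhs : ∀ u v : B ⊗[k] B, TensorProduct.assoc k B (B ⊗[k] B) B
      (rTensor B (comulRight k B) (embedMul k B u v)) =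
      lTensor B (embedMul k B u) (TensorProduct.assoc k B B B (rTensor B comul v)) := by
    intro u v
    induction u using TensorProduct.induction_on with
    | zero => simp
    | add u u' hu hu' => simp only [map_add, lTensor_add, LinearMap.add_apply, hu, hu']
    | tmul a b =>
      induction v using TensorProduct.induction_on with
      | zero => simp
      | add v v' hv hv' => simp only [map_add, hv, hv']
      | tmul c d =>
        simp only [embedMul_apply, embedFst_tmul, embedSnd_tmul,
          Algebra.TensorProduct.tmul_mul_tmul, one_mul, mul_one, rTensor_tmul, comulRight,
          comp_apply, lTensor_tmul]
        induction comul (R := k) c using TensorProduct.induction_on with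
        | zero => simp
        | add e e' he he' => simp only [add_tmul, tmul_add, map_add, he, he']
        | tmul e f => simp
  rw [comp_apply, comp_apply, comp_apply, LinearEquiv.coe_coe, coact_tmul, ← embedMul_apply,
    hrhs, coassoc_apply]
  simp only [comulRight, comp_apply, LinearEquiv.coe_coe, lTensor_tmul, hlhs]

theorem lTensor_pB0_comulLeft (z : B ⊗[k] B) :
    lTensor B (pB0 k B) (comulLeft k B z) = comul (pB0 k B z) := by
  induction z using TensorProduct.induction_on with
  | zero => simp
  | add u v hu hv => simp only [map_add, hu, hv]
  | tmul x y =>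
    simp only [comulLeft, comp_apply, rTensor_tmul, LinearEquiv.coe_coe, pB0_tmul, map_smul]
    induction comul (R := k) x using TensorProduct.induction_on with
    | zero => simp
    | add u v hu hv => simp only [add_tmul, map_add, hu, hv, smul_add]
    | tmul a b => simp [tmul_smul]

theorem lTensor_qB0_comulLeft (z : B ⊗[k] B) : lTensor B (qB0 k B) (comulLeft k B z) = z := by
  induction z using TensorProduct.induction_on with
  | zero => simp
  | add u v hu hv => simp only [map_add, hu, hv]
  | tmul x y =>
    have : ∀ u : B ⊗[k] B,
        lTensor B (qB0 k B) (TensorProduct.assoc k B B B (u ⊗ₜ y)) = pB0 k B u ⊗ₜ y := by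
      intro u
      induction u using TensorProduct.induction_on with
      | zero => simp
      | add u v hu hv => simp only [add_tmul, map_add, hu, hv]
      | tmul a b => simp [tmul_smul, smul_tmul']
    simp [comulLeft, this]

theorem lTensor_pB0_comulRight (z : B ⊗[k] B) :
    lTensor B (pB0 k B) (comulRight k B z) = TensorProduct.comm k B B z := by
  induction z using TensorProduct.induction_on with
  | zero => simp
  | add u v hu hv => simp only [map_add, hu, hv]
  | tmul x y =>
    have : ∀ v : B ⊗[k] B, lTensor B (pB0 k B) (TensorProduct.leftComm k B B B (x ⊗ₜ v)) =
        pB0 k B v ⊗ₜ x := by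
      intro v
      induction v using TensorProduct.induction_on with
      | zero => simp
      | add u v hu hv => simp only [tmul_add, map_add, hu, hv, add_tmul]
      | tmul c d => simp [tmul_smul, smul_tmul']
    simp [comulRight, this]

theorem lTensor_qB0_comulRight (z : B ⊗[k] B) :
    lTensor B (qB0 k B) (comulRight k B z) = comul (qB0 k B z) := by
  induction z using TensorProduct.induction_on with
  | zero => simp
  | add u v hu hv => simp only [map_add, hu, hv]
  | tmul x y =>
    simp only [comulRight, comp_apply, lTensor_tmul, LinearEquiv.coe_coe, qB0_tmul, map_smul]
    induction comul (R := k) y using TensorProduct.induction_on with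
    | zero => simp
    | add u v hu hv => simp only [tmul_add, map_add, hu, hv, smul_add]
    | tmul c d => simp [tmul_smul]

section
variable [Module.Flat k B] {T : B →ₗ[k] B}

theorem lTensor_lTensor_pB0_eq_lTensor_qB0 (hT : ∀ z ∈ coinv k B, T (pB0 k B z) = qB0 k B z)
    {w : B ⊗[k] (B ⊗[k] B)} (hw : lTensor B (coact k B) w = lTensor B (unitR k B) w) :
    lTensor B T (lTensor B (pB0 k B) w) = lTensor B (qB0 k B) w := by
  rw [← comp_apply, ← lTensor_comp]
  exact lTensor_eq_of_eqOn_eqLocus hT hw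

theorem lTensor_comul_pB0 (hT : ∀ z ∈ coinv k B, T (pB0 k B z) = qB0 k B z)
    {z : B ⊗[k] B} (hz : z ∈ coinv k B) : lTensor B T (comul (pB0 k B z)) = z := by
  rw [← lTensor_pB0_comulLeft, lTensor_lTensor_pB0_eq_lTensor_qB0 hT
    (lTensor_coact_eq_of_colinear comulLeft_colinear hz), lTensor_qB0_comulLeft]

theorem rTensor_eq_comm_comul_qB0 (hT : ∀ z ∈ coinv k B, T (pB0 k B z) = qB0 k B z)
    {z : B ⊗[k] B} (hz : z ∈ coinv k B) :
    rTensor B T z = TensorProduct.comm k B B (comul (qB0 k B z)) := by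
  apply (TensorProduct.comm k B B).injective
  rw [← lTensor_comm, ← lTensor_pB0_comulRight, lTensor_lTensor_pB0_eq_lTensor_qB0 hT
    (lTensor_coact_eq_of_colinear comulRight_colinear hz), lTensor_qB0_comulRight, comm_comm]

end

variable (k B) in
def opMul : B ⊗[k] B →ₗ[k] B ⊗[k] B →ₗ[k] B ⊗[k] B :=
  TensorProduct.map₂ (LinearMap.mul k B) (LinearMap.mul k B).flip

@[simp] theorem opMul_tmul (x y x' y' : B) :
    opMul k B (x ⊗ₜ y) (x' ⊗ₜ y') = (x * x') ⊗ₜ (y' * y) := rfl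

theorem pB0_opMul (u v : B ⊗[k] B) :
    pB0 k B (opMul k B u v) = pB0 k B u * pB0 k B v := by
  induction u using TensorProduct.induction_on with
  | zero => simp
  | add u u' hu hu' => simp only [map_add, LinearMap.add_apply, hu, hu', add_mul]
  | tmul x y =>
    induction v using TensorProduct.induction_on with
    | zero => simp
    | add v v' hv hv' => simp only [map_add, hv, hv', mul_add]
    | tmul x' y' => simp [smul_smul, mul_comm]

theorem qB0_opMul (u v : B ⊗[k] B) :
    qB0 k B (opMul k B u v) = qB0 k B v * qB0 k B u := by
  induction u using TensorProduct.induction_on with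
  | zero => simp
  | add u u' hu hu' => simp only [map_add, LinearMap.add_apply, hu, hu', mul_add]
  | tmul x y =>
    induction v using TensorProduct.induction_on with
    | zero => simp
    | add v v' hv hv' => simp only [map_add, hv, hv', add_mul]
    | tmul x' y' => simp [smul_smul]

theorem coact_opMul_tmul (x y : B) (v : B ⊗[k] B) :
    coact k B (opMul k B (x ⊗ₜ y) v) =
      embedFst k B (comul x) * coact k B v * embedSnd k B (comul y) := by
  induction v using TensorProduct.induction_on with
  | zero => simp
  | add v v' hv hv' => simp only [map_add, hv, hv', mul_add, add_mul]
  | tmul x' y' => simp only [opMul_tmul, coact_tmul, Bialgebra.comul_mul, map_mul, mul_assoc]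

theorem commute_embedFst_tmul_one (u : B ⊗[k] B) (y : B) :
    Commute (embedFst k B u) (embedSnd k B (y ⊗ₜ 1)) := by
  induction u using TensorProduct.induction_on with
  | zero => simp
  | add u u' hu hu' => rw [map_add]; exact hu.add_left hu'
  | tmul a b => simp [Commute, SemiconjBy]

theorem commute_embedSnd_tmul_one (v : B ⊗[k] B) (x : B) :
    Commute (embedSnd k B v) (embedFst k B (x ⊗ₜ 1)) := by
  induction v using TensorProduct.induction_on with
  | zero => simp
  | add v v' hv hv' => rw [map_add]; exact hv.add_left hv'
  | tmul c d => simp [Commute, SemiconjBy]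

theorem rTensor_opMul_flip_tmul (x' y' : B) (W : (B ⊗[k] B) ⊗[k] B) :
    rTensor B ((opMul k B).flip (x' ⊗ₜ y')) W =
      embedSnd k B (y' ⊗ₜ 1) * W * embedFst k B (x' ⊗ₜ 1) := by
  induction W using TensorProduct.induction_on with
  | zero => simp
  | add W W' hW hW' => simp only [map_add, hW, hW', mul_add, add_mul]
  | tmul u m =>
    induction u using TensorProduct.induction_on with
    | zero => simp
    | add u u' hu hu' => simp only [add_tmul, map_add, hu, hu', mul_add, add_mul]
    | tmul a b => simp

theorem embedFst_mul_tmul_one_mul_embedSnd (x y : B) (v : B ⊗[k] B) :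
    embedFst k B (comul x) * (v ⊗ₜ 1) * embedSnd k B (comul y) =
      rTensor B ((opMul k B).flip v) (coact k B (x ⊗ₜ y)) := by
  induction v using TensorProduct.induction_on with
  | zero => simp
  | add v v' hv hv' =>
    simp only [add_tmul, map_add, mul_add, add_mul, hv, hv', rTensor_add, LinearMap.add_apply]
  | tmul x' y' =>
    set ι₁ := embedFst k B (x' ⊗ₜ 1)
    set ι₂ := embedSnd k B (y' ⊗ₜ 1)
    have hsplit : (x' ⊗ₜ[k] y') ⊗ₜ[k] (1 : B) = ι₂ * ι₁ := by simp [ι₁, ι₂]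
    rw [hsplit, rTensor_opMul_flip_tmul, coact_tmul]
    calc embedFst k B (comul x) * (ι₂ * ι₁) * embedSnd k B (comul y)
        = (embedFst k B (comul x) * ι₂) * (ι₁ * embedSnd k B (comul y)) := by
          simp only [mul_assoc]
      _ = (ι₂ * embedFst k B (comul x)) * (embedSnd k B (comul y) * ι₁) := by
          rw [(commute_embedFst_tmul_one _ y').eq, (commute_embedSnd_tmul_one _ x').eq]
      _ = ι₂ * (embedFst k B (comul x) * embedSnd k B (comul y)) * ι₁ := by
          simp only [mul_assoc]

theorem coact_opMul {v : B ⊗[k] B} (hv : v ∈ coinv k B) (u : B ⊗[k] B) :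
    coact k B (opMul k B u v) = rTensor B ((opMul k B).flip v) (coact k B u) := by
  induction u using TensorProduct.induction_on with
  | zero => simp
  | add u u' hu hu' => simp only [map_add, LinearMap.add_apply, hu, hu']
  | tmul x y =>
    rw [coact_opMul_tmul, mem_coinv_iff.mp hv, embedFst_mul_tmul_one_mul_embedSnd]

theorem opMul_mem_coinv {u v : B ⊗[k] B} (hu : u ∈ coinv k B) (hv : v ∈ coinv k B) :
    opMul k B u v ∈ coinv k B := by
  rw [mem_coinv_iff, coact_opMul hv, mem_coinv_iff.mp hu, rTensor_tmul, flip_apply]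

end

theorem stmt18_general (k B : Type*) [Field k] [Ring B] [Bialgebra k B]
    (T : B →ₗ[k] B)
    (hT : ∀ z ∈ coinv k B, T (pB0 k B z) = qB0 k B z) :
    ∀ a ∈ pB0 k B '' (coinv k B : Set (B ⊗[k] B)),
      ∀ b ∈ pB0 k B '' (coinv k B : Set (B ⊗[k] B)),
      LinearMap.mul' k B
          ((TensorProduct.map LinearMap.id T) (Coalgebra.comul (R := k) a))
        = Coalgebra.counit (R := k) a • (1 : B) ∧
      (TensorProduct.map T T) (Coalgebra.comul (R := k) a)
        = (TensorProduct.comm k B B) (Coalgebra.comul (R := k) (T a)) ∧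
      T (a * b) = T b * T a := by
  rintro _ ⟨z, hz, rfl⟩ _ ⟨z', hz', rfl⟩
  have hcomul : lTensor B T (comul (pB0 k B z)) = z := lTensor_comul_pB0 hT hz
  refine ⟨?_, ?_, ?_⟩
  · rw [← lTensor_def, hcomul, mul'_eq_counit_smul_one hz]
  · rw [← rTensor_comp_lTensor, comp_apply, hcomul, rTensor_eq_comm_comul_qB0 hT hz, hT z hz]
  · rw [← pB0_opMul, hT _ (opMul_mem_coinv hz hz'), qB0_opMul, hT z hz, hT z' hz']

theorem stmt18 (k B : Type*) [Field k] [Ring B] [Bialgebra k B]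
    (hinj : Function.Injective (pB k B))
    (T : B →ₗ[k] B)
    (hT : ∀ z ∈ coinv k B, T (pB0 k B z) = qB0 k B z) :
    ∀ a ∈ pB0 k B '' (coinv k B : Set (B ⊗[k] B)),
      ∀ b ∈ pB0 k B '' (coinv k B : Set (B ⊗[k] B)),
      LinearMap.mul' k B
          ((TensorProduct.map LinearMap.id T) (Coalgebra.comul (R := k) a))
        = Coalgebra.counit (R := k) a • (1 : B) ∧
      (TensorProduct.map T T) (Coalgebra.comul (R := k) a)
        = (TensorProduct.comm k B B) (Coalgebra.comul (R := k) (T a)) ∧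
      T (a * b) = T b * T a :=
  stmt18_general k B T hT
end
end

section
/- Consider the 6-dimensional bialgebra B = k⟨x, y | yx = −xy, x³ = x, y² = 0⟩ with Δ(x) = x ⊗ x, Δ(y) = x ⊗ y + y ⊗ 1, ε(x) = 1, ε(y) = 0 (char k ≠ 2). Then the linear map S := 2·Id − Id^{*3} is an anti-algebra endomorphism of B with S(x) = x, S(y) = (1 − x − x²)y, it satisfies S * Id^{*2} = Id and S * Id = Id * S (so S is a two-sided 1-antipode), and S is invertible with S⁴ = Id. -/
/-!
In the convolution algebra `WithConv (B →ₗ[k] B)`, `S = 2·I − I³` (with `I = Id`) is a polynomial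
in `I`, so it commutes with every convolution power of `I`, and `S * I² = 2·I³ − I⁵` equals `I` as
soon as `I⁵ + I = 2·I³`. Convolution powers are explicit on the monomials: a group-like `g` has
`I^(n+1) g = g^(n+1)`, and a `(g, h)`-skew-primitive `b` has `I^(n+1) b = ∑_{i+j=n} gⁱ b hʲ`.
The six monomials `1, x, x², y, xy, x²y` span `B` and are all of one of these two kinds, so
`I⁵ + I = 2·I³`, the values of `S` and `S⁴ = Id` reduce to rewriting words in `x, y` to the normal
form `xᵃ yᵇ`. Anti-multiplicativity only has to be checked for left factors `x` and `y`, which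
generate `B`.
-/

noncomputable section
open TensorProduct LinearMap

open Coalgebra WithConv

theorem LinearMap.map_mul_rev_of_adjoin_eq_top {R A : Type*} [CommSemiring R] [Semiring A]
    [Algebra R A] {s : Set A} (hs : Algebra.adjoin R s = ⊤) (S : A →ₗ[R] A) (h1 : S 1 = 1)
    (hS : ∀ a ∈ s, ∀ b, S (a * b) = S b * S a) (a b : A) : S (a * b) = S b * S a := by
  induction (hs ▸ Algebra.mem_top : a ∈ Algebra.adjoin R s) using Algebra.adjoin_induction
    generalizing b with
  | mem a ha => exact hS a ha b
  | algebraMap r =>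
    rw [Algebra.algebraMap_eq_smul_one, smul_mul_assoc, one_mul, map_smul, map_smul, h1,
      mul_smul_one]
  | add a a' _ _ ha ha' => rw [add_mul, map_add, map_add, ha, ha', mul_add]
  | mul a a' _ _ ha ha' => rw [mul_assoc, ha, ha', ha a', mul_assoc]

section Convolution

variable {k B A : Type*} [CommRing k] [Ring B] [Bialgebra k B] [Ring A] [Algebra k A]

theorem conv_eq_ofConv_mul (f g : B →ₗ[k] A) : conv f g = (toConv f * toConv g).ofConv := rfl

theorem convPow_eq_ofConv_pow (n : ℕ) :
    convPow k B n = (toConv (LinearMap.id : B →ₗ[k] B) ^ n).ofConv := by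
  induction n with
  | zero => rfl
  | succ n ih => rw [convPow, conv_eq_ofConv_mul, ih, toConv_ofConv, pow_succ]

theorem conv_apply_of_comul_eq_tmul_self {g : B} (hg : comul (R := k) g = g ⊗ₜ g)
    (f f' : B →ₗ[k] A) : conv f f' g = f g * f' g := by
  simp [conv, hg]

theorem conv_apply_of_comul_eq_skew {g h b : B} (hb : comul (R := k) b = g ⊗ₜ b + b ⊗ₜ h)
    (f f' : B →ₗ[k] A) : conv f f' b = f g * f' b + f b * f' h := by
  simp [conv, hb]

theorem convPow_one : convPow k B 1 = LinearMap.id := by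
  rw [convPow_eq_ofConv_pow, pow_one]

theorem convPow_succ_apply_of_comul_eq_tmul_self {g : B} (hg : comul (R := k) g = g ⊗ₜ g)
    (n : ℕ) : convPow k B (n + 1) g = g ^ (n + 1) := by
  induction n with
  | zero => simp [convPow_one]
  | succ n ih =>
    rw [convPow, conv_apply_of_comul_eq_tmul_self hg, ih, LinearMap.id_apply, ← pow_succ]

open Finset in
theorem convPow_succ_apply_of_comul_eq_skew {g h b : B} (hg : comul (R := k) g = g ⊗ₜ g)
    (hb : comul (R := k) b = g ⊗ₜ b + b ⊗ₜ h) (n : ℕ) :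
    convPow k B (n + 1) b = ∑ p ∈ antidiagonal n, g ^ p.1 * b * h ^ p.2 := by
  induction n with
  | zero => simp [convPow_one]
  | succ n ih =>
    rw [convPow, conv_apply_of_comul_eq_skew hb, ih, convPow_succ_apply_of_comul_eq_tmul_self hg,
      Nat.sum_antidiagonal_succ', sum_mul]
    simp [pow_succ, mul_assoc]

variable (k B) in
def twoIdSubConvCube : B →ₗ[k] B := (2 : k) • LinearMap.id - convPow k B 3

theorem twoIdSubConvCube_apply (b : B) : twoIdSubConvCube k B b = b + b - convPow k B 3 b := by
  simp [twoIdSubConvCube, two_smul]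

theorem twoIdSubConvCube_apply_of_comul_eq_tmul_self {g : B} (hg : comul (R := k) g = g ⊗ₜ g)
    (hg3 : g ^ 3 = g) : twoIdSubConvCube k B g = g := by
  rw [twoIdSubConvCube_apply, convPow_succ_apply_of_comul_eq_tmul_self hg, hg3,
    add_sub_cancel_right]

theorem twoIdSubConvCube_apply_of_comul_eq_skew {g h b : B} (hg : comul (R := k) g = g ⊗ₜ g)
    (hb : comul (R := k) b = g ⊗ₜ b + b ⊗ₜ h) :
    twoIdSubConvCube k B b = b + b - (b * h ^ 2 + g * b * h + g ^ 2 * b) := by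
  rw [twoIdSubConvCube_apply, convPow_succ_apply_of_comul_eq_skew hg hb]
  simp [Finset.Nat.sum_antidiagonal_succ, sq, add_assoc]

theorem twoIdSubConvCube_one : twoIdSubConvCube k B 1 = 1 :=
  twoIdSubConvCube_apply_of_comul_eq_tmul_self Bialgebra.comul_one (one_pow 3)

theorem conv_twoIdSubConvCube_comm (n : ℕ) :
    conv (twoIdSubConvCube k B) (convPow k B n) = conv (convPow k B n) (twoIdSubConvCube k B) := by
  have hcomm : Commute (toConv (twoIdSubConvCube k B)) (toConv LinearMap.id) := by
    rw [twoIdSubConvCube, convPow_eq_ofConv_pow, toConv_sub, toConv_smul, toConv_ofConv]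
    exact ((Commute.refl _).smul_left 2).sub_left ((Commute.refl _).pow_left 3)
  rw [conv_eq_ofConv_mul, conv_eq_ofConv_mul, convPow_eq_ofConv_pow n, toConv_ofConv,
    (hcomm.pow_right n).eq]

theorem conv_twoIdSubConvCube_convPow_two
    (h : convPow k B 5 + LinearMap.id = (2 : k) • convPow k B 3) :
    conv (twoIdSubConvCube k B) (convPow k B 2) = convPow k B 1 := by
  simp only [twoIdSubConvCube, convPow_eq_ofConv_pow, conv_eq_ofConv_mul] at h ⊢
  set I := toConv (LinearMap.id : B →ₗ[k] B)
  replace h : I ^ 5 + I = (2 : k) • I ^ 3 := by simpa using congrArg toConv h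
  rw [toConv_sub, toConv_smul, toConv_ofConv, toConv_ofConv, sub_mul, smul_mul_assoc, ← pow_succ',
    ← pow_add, ← h, add_sub_cancel_left, pow_one]

end Convolution

section SixDimensional

variable {k B : Type*} [CommRing k] [Ring B] [Bialgebra k B]

variable (k) in
structure IsGeneratorPair (x y : B) : Prop where
  y_mul_x : y * x = -(x * y)
  x_pow_three : x ^ 3 = x
  y_sq : y ^ 2 = 0
  comul_x : comul (R := k) x = x ⊗ₜ x
  comul_y : comul (R := k) y = x ⊗ₜ y + y ⊗ₜ 1
  span_eq_top : Submodule.span k {1, x, x * x, y, x * y, x * (x * y)} = ⊤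

namespace IsGeneratorPair

variable {x y : B}

theorem x_mul_x_mul_x (h : IsGeneratorPair k x y) : x * (x * x) = x :=
  (pow_three x).symm.trans h.x_pow_three

theorem x_mul_x_mul_x_mul (h : IsGeneratorPair k x y) (t : B) : x * (x * (x * t)) = x * t := by
  rw [← mul_assoc, ← mul_assoc, mul_assoc x, h.x_mul_x_mul_x]

theorem y_mul_x_mul (h : IsGeneratorPair k x y) (t : B) : y * (x * t) = -(x * (y * t)) := by
  rw [← mul_assoc, h.y_mul_x, neg_mul, mul_assoc]

theorem y_mul_y (h : IsGeneratorPair k x y) : y * y = 0 := by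
  rw [← sq, h.y_sq]

theorem y_mul_y_mul (h : IsGeneratorPair k x y) (t : B) : y * (y * t) = 0 := by
  rw [← mul_assoc, h.y_mul_y, zero_mul]

theorem comul_x_mul_x (h : IsGeneratorPair k x y) :
    comul (R := k) (x * x) = (x * x) ⊗ₜ (x * x) := by
  rw [Bialgebra.comul_mul, h.comul_x, Algebra.TensorProduct.tmul_mul_tmul]

theorem comul_x_mul_y (h : IsGeneratorPair k x y) :
    comul (R := k) (x * y) = (x * x) ⊗ₜ (x * y) + (x * y) ⊗ₜ x := by
  simp [h.comul_x, h.comul_y, mul_add]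

theorem comul_x_mul_x_mul_y (h : IsGeneratorPair k x y) :
    comul (R := k) (x * (x * y)) = x ⊗ₜ (x * (x * y)) + (x * (x * y)) ⊗ₜ (x * x) := by
  simp [h.comul_x, h.comul_x_mul_y, mul_add, h.x_mul_x_mul_x]

theorem linearMap_ext {M : Type*} [AddCommMonoid M] [Module k M] (h : IsGeneratorPair k x y)
    {f g : B →ₗ[k] M} (h1 : f 1 = g 1) (hx : f x = g x) (hxx : f (x * x) = g (x * x))
    (hy : f y = g y) (hxy : f (x * y) = g (x * y)) (hxxy : f (x * (x * y)) = g (x * (x * y))) :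
    f = g :=
  LinearMap.ext_on h.span_eq_top (by simp [Set.EqOn, *])

theorem adjoin_eq_top (h : IsGeneratorPair k x y) : Algebra.adjoin k {x, y} = ⊤ := by
  have hx : x ∈ Algebra.adjoin k {x, y} := Algebra.subset_adjoin (by simp)
  have hy : y ∈ Algebra.adjoin k {x, y} := Algebra.subset_adjoin (by simp)
  have hspan : Submodule.span k {1, x, x * x, y, x * y, x * (x * y)} ≤
      Subalgebra.toSubmodule (Algebra.adjoin k {x, y}) := by
    simp [Submodule.span_le, Set.insert_subset_iff, mul_mem, hx, hy, one_mem]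
  exact eq_top_iff.2 fun b _ ↦ hspan (h.span_eq_top ▸ Submodule.mem_top)

theorem twoIdSubConvCube_x (h : IsGeneratorPair k x y) : twoIdSubConvCube k B x = x :=
  twoIdSubConvCube_apply_of_comul_eq_tmul_self h.comul_x h.x_pow_three

theorem twoIdSubConvCube_x_mul_x (h : IsGeneratorPair k x y) :
    twoIdSubConvCube k B (x * x) = x * x :=
  twoIdSubConvCube_apply_of_comul_eq_tmul_self h.comul_x_mul_x <| by
    rw [(Commute.refl x).mul_pow, h.x_pow_three]

theorem twoIdSubConvCube_y (h : IsGeneratorPair k x y) :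
    twoIdSubConvCube k B y = y - x * y - x * (x * y) := by
  rw [twoIdSubConvCube_apply_of_comul_eq_skew h.comul_x h.comul_y, one_pow, mul_one, mul_one, sq,
    mul_assoc]
  abel

theorem twoIdSubConvCube_x_mul_y (h : IsGeneratorPair k x y) :
    twoIdSubConvCube k B (x * y) = x * (x * y) := by
  rw [twoIdSubConvCube_apply_of_comul_eq_skew h.comul_x_mul_x h.comul_x_mul_y]
  simp [sq, mul_assoc, h.x_mul_x_mul_x_mul, h.y_mul_x_mul, h.x_mul_x_mul_x, h.y_mul_x]

theorem twoIdSubConvCube_x_mul_x_mul_y (h : IsGeneratorPair k x y) :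
    twoIdSubConvCube k B (x * (x * y)) = -(x * y) := by
  rw [twoIdSubConvCube_apply_of_comul_eq_skew h.comul_x h.comul_x_mul_x_mul_y]
  simp [sq, mul_assoc, h.x_mul_x_mul_x_mul, h.y_mul_x_mul, h.x_mul_x_mul_x, h.y_mul_x]

theorem convPow_five_add_id (h : IsGeneratorPair k x y) :
    convPow k B 5 + LinearMap.id = (2 : k) • convPow k B 3 := by
  refine h.linearMap_ext ?_ ?_ ?_ ?_ ?_ ?_ <;>
    simp [two_smul, Finset.Nat.antidiagonal_succ, pow_succ, mul_assoc,
      convPow_succ_apply_of_comul_eq_tmul_self Bialgebra.comul_one,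
      convPow_succ_apply_of_comul_eq_tmul_self h.comul_x,
      convPow_succ_apply_of_comul_eq_tmul_self h.comul_x_mul_x,
      convPow_succ_apply_of_comul_eq_skew h.comul_x h.comul_y,
      convPow_succ_apply_of_comul_eq_skew h.comul_x_mul_x h.comul_x_mul_y,
      convPow_succ_apply_of_comul_eq_skew h.comul_x h.comul_x_mul_x_mul_y,
      h.x_mul_x_mul_x_mul, h.y_mul_x_mul, h.x_mul_x_mul_x, h.y_mul_x] <;>
    abel

theorem twoIdSubConvCube_x_mul (h : IsGeneratorPair k x y) (b : B) :
    twoIdSubConvCube k B (x * b) = twoIdSubConvCube k B b * twoIdSubConvCube k B x := by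
  refine LinearMap.congr_fun (h.linearMap_ext (f := twoIdSubConvCube k B ∘ₗ mulLeft k x)
    (g := mulRight k (twoIdSubConvCube k B x) ∘ₗ twoIdSubConvCube k B) ?_ ?_ ?_ ?_ ?_ ?_) b <;>
    simp [mul_assoc, sub_mul, h.x_mul_x_mul_x, h.x_mul_x_mul_x_mul, h.y_mul_x,
      twoIdSubConvCube_one, h.twoIdSubConvCube_x, h.twoIdSubConvCube_x_mul_x, h.twoIdSubConvCube_y,
      h.twoIdSubConvCube_x_mul_y, h.twoIdSubConvCube_x_mul_x_mul_y]

theorem twoIdSubConvCube_y_mul (h : IsGeneratorPair k x y) (b : B) :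
    twoIdSubConvCube k B (y * b) = twoIdSubConvCube k B b * twoIdSubConvCube k B y := by
  refine LinearMap.congr_fun (h.linearMap_ext (f := twoIdSubConvCube k B ∘ₗ mulLeft k y)
    (g := mulRight k (twoIdSubConvCube k B y) ∘ₗ twoIdSubConvCube k B) ?_ ?_ ?_ ?_ ?_ ?_) b <;>
    simp [mul_assoc, mul_sub, sub_mul, h.x_mul_x_mul_x_mul, h.y_mul_x_mul, h.y_mul_x, h.y_mul_y,
      twoIdSubConvCube_one, h.twoIdSubConvCube_x, h.twoIdSubConvCube_x_mul_x, h.twoIdSubConvCube_y,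
      h.twoIdSubConvCube_x_mul_y, h.twoIdSubConvCube_x_mul_x_mul_y]

theorem twoIdSubConvCube_mul (h : IsGeneratorPair k x y) (a b : B) :
    twoIdSubConvCube k B (a * b) = twoIdSubConvCube k B b * twoIdSubConvCube k B a := by
  refine (twoIdSubConvCube k B).map_mul_rev_of_adjoin_eq_top h.adjoin_eq_top twoIdSubConvCube_one
    ?_ a b
  rintro a (rfl | rfl)
  exacts [h.twoIdSubConvCube_x_mul, h.twoIdSubConvCube_y_mul]

theorem twoIdSubConvCube_comp_comp_comp (h : IsGeneratorPair k x y) :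
    twoIdSubConvCube k B ∘ₗ twoIdSubConvCube k B ∘ₗ twoIdSubConvCube k B ∘ₗ
      twoIdSubConvCube k B = LinearMap.id := by
  refine h.linearMap_ext ?_ ?_ ?_ ?_ ?_ ?_ <;>
    simp [twoIdSubConvCube_one, h.twoIdSubConvCube_x, h.twoIdSubConvCube_x_mul_x,
      h.twoIdSubConvCube_y, h.twoIdSubConvCube_x_mul_y, h.twoIdSubConvCube_x_mul_x_mul_y]
  abel

end IsGeneratorPair

end SixDimensional

theorem stmt19_general (k B : Type*) [Field k] [Ring B] [Bialgebra k B]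
    (x y : B)
    (hyx : y * x = -(x * y)) (hx3 : x ^ 3 = x) (hy2 : y ^ 2 = 0)
    (hΔx : Coalgebra.comul (R := k) x = x ⊗ₜ[k] x)
    (hΔy : Coalgebra.comul (R := k) y = x ⊗ₜ[k] y + y ⊗ₜ[k] (1 : B))
    (bas : Module.Basis (Fin 6) k B)
    (hbas : ∀ i : Fin 6, bas i = ![1, x, x ^ 2, y, x * y, x ^ 2 * y] i) :
    ∃ S : B →ₗ[k] B,
      S = (2 : k) • (LinearMap.id : B →ₗ[k] B) - convPow k B 3 ∧
      S x = x ∧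
      S y = (1 - x - x ^ 2) * y ∧
      S 1 = 1 ∧
      (∀ a b : B, S (a * b) = S b * S a) ∧
      conv S (convPow k B 2) = convPow k B 1 ∧
      conv (convPow k B 2) S = convPow k B 1 ∧
      conv S LinearMap.id = conv LinearMap.id S ∧
      S ∘ₗ S ∘ₗ S ∘ₗ S = LinearMap.id := by
  have hrange : Set.range bas = {1, x, x * x, y, x * y, x * (x * y)} := by
    rw [show ⇑bas = _ from funext hbas]
    simp only [Matrix.range_cons, Matrix.range_empty, Set.union_empty, Set.singleton_union, sq,
      mul_assoc]
  have h : IsGeneratorPair k x y := ⟨hyx, hx3, hy2, hΔx, hΔy, hrange ▸ bas.span_eq⟩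
  have hconv : conv (twoIdSubConvCube k B) (convPow k B 2) = convPow k B 1 :=
    conv_twoIdSubConvCube_convPow_two h.convPow_five_add_id
  refine ⟨twoIdSubConvCube k B, rfl, h.twoIdSubConvCube_x, ?_, twoIdSubConvCube_one,
    h.twoIdSubConvCube_mul, hconv, (conv_twoIdSubConvCube_comm 2).symm.trans hconv, ?_,
    h.twoIdSubConvCube_comp_comp_comp⟩
  · rw [h.twoIdSubConvCube_y, sub_mul, sub_mul, one_mul, sq, mul_assoc]
  · simpa [convPow_one] using conv_twoIdSubConvCube_comm (k := k) (B := B) 1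

/-- The 6-dimensional bialgebra
`B = k⟨x, y | yx = −xy, x³ = x, y² = 0⟩` is encoded as a bialgebra with elements
`x, y` satisfying the defining relations, the stated comultiplication and counit,
and such that `{1, x, x², y, xy, x²y}` is a `k`-basis. -/
theorem stmt19 (k B : Type*) [Field k] [Ring B] [Bialgebra k B]
    (hchar : (2 : k) ≠ 0)
    (x y : B)
    (hyx : y * x = -(x * y)) (hx3 : x ^ 3 = x) (hy2 : y ^ 2 = 0)
    (hΔx : Coalgebra.comul (R := k) x = x ⊗ₜ[k] x)
    (hΔy : Coalgebra.comul (R := k) y = x ⊗ₜ[k] y + y ⊗ₜ[k] (1 : B))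
    (hεx : Coalgebra.counit (R := k) x = 1)
    (hεy : Coalgebra.counit (R := k) y = 0)
    (bas : Module.Basis (Fin 6) k B)
    (hbas : ∀ i : Fin 6, bas i = ![1, x, x ^ 2, y, x * y, x ^ 2 * y] i) :
    ∃ S : B →ₗ[k] B,
      S = (2 : k) • (LinearMap.id : B →ₗ[k] B) - convPow k B 3 ∧
      S x = x ∧
      S y = (1 - x - x ^ 2) * y ∧
      S 1 = 1 ∧
      (∀ a b : B, S (a * b) = S b * S a) ∧
      conv S (convPow k B 2) = convPow k B 1 ∧
      conv (convPow k B 2) S = convPow k B 1 ∧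
      conv S LinearMap.id = conv LinearMap.id S ∧
      S ∘ₗ S ∘ₗ S ∘ₗ S = LinearMap.id :=
  stmt19_general k B x y hyx hx3 hy2 hΔx hΔy bas hbas
end
end
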